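/- Let f : [0,1]^d → ℝ be continuously differentiable and fix i ∈ {1,…,d}. Then ∫_{H^d} u_i(x)·(∂f/∂x_i)(x) dx = (1/2)∫_{H^d} [f(1,z) − f(0,z)]·[f(1,z) + f(0,z) − 2f(x)] dx. -/

import Mathlib

open MeasureTheory Real

noncomputable section

/-- The unit cube `[0,1]^d` in `ℝ^d`. -/
def unitCube (d : ℕ) : Set (Fin d → ℝ) := Set.Icc 0 1

/-- The partial derivative `∂f/∂x_i` at the point `x`. -/
def pderivI {d : ℕ} (f : (Fin d → ℝ) → ℝ) (i : Fin d) (x : Fin d → ℝ) : ℝ :=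
  deriv (fun t : ℝ => f (Function.update x i t)) (x i)

/-- `u_i(x) = f(x) - ∫₀¹ f(x₁,…,x_{i-1},t,x_{i+1},…,x_d) dt`, the sum of all ANOVA
terms of `f` depending on `x_i`. -/
def uComp {d : ℕ} (f : (Fin d → ℝ) → ℝ) (i : Fin d) (x : Fin d → ℝ) : ℝ :=
  f x - ∫ t in (0:ℝ)..1, f (Function.update x i t)

/-- The total variance `D = ∫ f² dx − (∫ f dx)²` over the unit cube. -/
def totVar {d : ℕ} (f : (Fin d → ℝ) → ℝ) : ℝ :=
  (∫ x in unitCube d, (f x) ^ 2) - (∫ x in unitCube d, f x) ^ 2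

/-- The total partial variance `D_i^tot = ∫ u_i² dx`. -/
def DTot {d : ℕ} (f : (Fin d → ℝ) → ℝ) (i : Fin d) : ℝ :=
  ∫ x in unitCube d, (uComp f i x) ^ 2

/-- The total Sobol' sensitivity index `S_i^tot = D_i^tot / D`. -/
def STot {d : ℕ} (f : (Fin d → ℝ) → ℝ) (i : Fin d) : ℝ :=
  DTot f i / totVar f

/-- The DGSM `ν_i = ∫ (∂f/∂x_i)² dx`. -/
def nuDGSM {d : ℕ} (f : (Fin d → ℝ) → ℝ) (i : Fin d) : ℝ :=
  ∫ x in unitCube d, (pderivI f i x) ^ 2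

/-- The DGSM `w_i^{(m)} = ∫ x_i^m (∂f/∂x_i) dx`. -/
def wDGSM {d : ℕ} (f : (Fin d → ℝ) → ℝ) (i : Fin d) (m : ℝ) : ℝ :=
  ∫ x in unitCube d, (x i) ^ m * pderivI f i x

/-- The DGSM `ς_i = (1/2) ∫ x_i (1 - x_i) (∂f/∂x_i)² dx`. -/
def sigmaDGSM {d : ℕ} (f : (Fin d → ℝ) → ℝ) (i : Fin d) : ℝ :=
  (1 / 2) * ∫ x in unitCube d, x i * (1 - x i) * (pderivI f i x) ^ 2

/-! Integrate along the `i`-th coordinate first. On the segment `t ↦ φ t = f (update x i t)`,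
`u_i = φ - m` with `m = ∫₀¹ φ` and `∂f/∂x_i = φ'`, so the left-hand fibre integral is
`[(φ - m)² / 2]₀¹ = ½ (φ 1 - φ 0) (φ 1 + φ 0 - 2m)`. On the right, `f x` averages to `m` along
the same segment, which gives the same expression without the factor `½`. -/

open Function

theorem setIntegral_unitCube_eq_integral_insertNth {n : ℕ} (i : Fin (n + 1))
    {F : (Fin (n + 1) → ℝ) → ℝ} (hF : IntegrableOn F (unitCube (n + 1))) :
    ∫ x in unitCube (n + 1), F x =
      ∫ z in Set.Icc (0 : Fin n → ℝ) 1, ∫ t in (0 : ℝ)..1, F (i.insertNth t z) := by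
  set e := MeasurableEquiv.piFinSuccAbove (fun _ : Fin (n + 1) => ℝ) i
  have he : ∀ p : ℝ × (Fin n → ℝ), e.symm p = i.insertNth p.1 p.2 := fun _ => rfl
  have hpre : e.symm ⁻¹' unitCube (n + 1) = Set.Icc (0 : ℝ) 1 ×ˢ Set.Icc (0 : Fin n → ℝ) 1 := by
    ext ⟨t, z⟩
    simp only [Set.mem_preimage, he, unitCube, Fin.insertNth_mem_Icc, Set.mem_prod]
    rfl
  have hmp := (volume_preserving_piFinSuccAbove (fun _ : Fin (n + 1) => ℝ) i).symm
  have hint := (hmp.integrableOn_comp_preimage e.symm.measurableEmbedding).2 hF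
  rw [hpre, Measure.volume_eq_prod] at hint
  rw [← hmp.setIntegral_preimage_emb e.symm.measurableEmbedding, hpre, Measure.volume_eq_prod,
    ← setIntegral_prod_swap, setIntegral_prod (fun z => F (e.symm z.swap)) hint.swap]
  simp only [Prod.swap, he, integral_Icc_eq_integral_Ioc,
    intervalIntegral.integral_of_le zero_le_one]

theorem setIntegral_unitCube_eq_integral_update {d : ℕ} {g : (Fin d → ℝ) → ℝ}
    (hg : Continuous g) (i : Fin d) :
    ∫ x in unitCube d, g x = ∫ x in unitCube d, ∫ t in (0 : ℝ)..1, g (update x i t) := by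
  obtain ⟨n, rfl⟩ := Nat.exists_eq_add_one_of_ne_zero i.pos.ne'
  have hcube : IsCompact (unitCube (n + 1)) := isCompact_Icc
  have havg : Continuous fun x => ∫ t in (0 : ℝ)..1, g (update x i t) :=
    intervalIntegral.continuous_parametric_intervalIntegral_of_continuous'
      (f := fun x t => g (update x i t)) (hg.comp (continuous_update i)) 0 1
  rw [setIntegral_unitCube_eq_integral_insertNth i (hg.continuousOn.integrableOn_compact hcube),
    setIntegral_unitCube_eq_integral_insertNth i (havg.continuousOn.integrableOn_compact hcube)]
  simp

theorem integral_sub_mul_deriv {φ : ℝ → ℝ} (hφ : ContDiff ℝ 1 φ) (a b c : ℝ) :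
    ∫ t in a..b, (φ t - c) * deriv φ t = ((φ b - c) ^ 2 - (φ a - c) ^ 2) / 2 := by
  have hd : Differentiable ℝ φ := hφ.differentiable one_ne_zero
  have hderiv : ∀ t, HasDerivAt (fun s => (φ s - c) ^ 2 / 2) ((φ t - c) * deriv φ t) t := by
    intro t
    refine ((((hd t).hasDerivAt.sub_const c).fun_pow 2).div_const 2).congr_deriv ?_
    ring
  rw [intervalIntegral.integral_eq_sub_of_hasDerivAt (fun t _ => hderiv t)
    (((hφ.continuous.sub continuous_const).mul (hφ.continuous_deriv le_rfl)).intervalIntegrable _ _)]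
  ring

theorem pderivI_update {d : ℕ} (f : (Fin d → ℝ) → ℝ) (i : Fin d) (x : Fin d → ℝ) (t : ℝ) :
    pderivI f i (update x i t) = deriv (fun s => f (update x i s)) t := by
  simp only [pderivI, update_idem, update_self]

theorem uComp_update {d : ℕ} (f : (Fin d → ℝ) → ℝ) (i : Fin d) (x : Fin d → ℝ) (t : ℝ) :
    uComp f i (update x i t) = f (update x i t) - ∫ s in (0 : ℝ)..1, f (update x i s) := by
  simp only [uComp, update_idem]

theorem pderivI_eq_fderiv {d : ℕ} {f : (Fin d → ℝ) → ℝ} {x : Fin d → ℝ}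
    (hf : DifferentiableAt ℝ f x) (i : Fin d) :
    pderivI f i x = fderiv ℝ f x (Pi.single i 1) := by
  have hx : HasFDerivAt f (fderiv ℝ f x) (update x i (x i)) := by
    rw [update_eq_self]
    exact hf.hasFDerivAt
  exact (hx.comp_hasDerivAt (x i) (hasDerivAt_update x i (x i))).deriv

theorem continuous_pderivI {d : ℕ} {f : (Fin d → ℝ) → ℝ} (hf : ContDiff ℝ 1 f) (i : Fin d) :
    Continuous (pderivI f i) := by
  have hd := hf.differentiable one_ne_zero
  simp only [funext fun x => pderivI_eq_fderiv (hd x) i]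
  exact (hf.continuous_fderiv one_ne_zero).clm_apply continuous_const

theorem continuous_uComp {d : ℕ} {f : (Fin d → ℝ) → ℝ} (hf : Continuous f) (i : Fin d) :
    Continuous (uComp f i) :=
  hf.sub (intervalIntegral.continuous_parametric_intervalIntegral_of_continuous'
    (f := fun x t => f (update x i t)) (hf.comp (continuous_update i)) 0 1)

/-- **Integral identity (14).** For `f` continuously differentiable on the unit cube,
`∫ u_i(x)·(∂f/∂x_i)(x) dx = (1/2) ∫ [f(1,z) − f(0,z)]·[f(1,z) + f(0,z) − 2f(x)] dx`. -/
theorem integral_u_mul_pderiv (d : ℕ) (f : (Fin d → ℝ) → ℝ) (hf : ContDiff ℝ 1 f)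
    (i : Fin d) :
    ∫ x in unitCube d, uComp f i x * pderivI f i x =
      (1 / 2) * ∫ x in unitCube d,
        (f (Function.update x i 1) - f (Function.update x i 0)) *
          (f (Function.update x i 1) + f (Function.update x i 0) - 2 * f x) := by
  have hlhs : Continuous fun x => uComp f i x * pderivI f i x :=
    (continuous_uComp hf.continuous i).mul (continuous_pderivI hf i)
  have hrhs : Continuous fun x => (f (update x i 1) - f (update x i 0)) *
      (f (update x i 1) + f (update x i 0) - 2 * f x) := by
    fun_prop
  rw [setIntegral_unitCube_eq_integral_update hlhs i,
    setIntegral_unitCube_eq_integral_update hrhs i, ← integral_const_mul]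
  refine setIntegral_congr_fun measurableSet_Icc fun x _ => ?_
  set φ : ℝ → ℝ := fun t => f (update x i t)
  have hφ : ContDiff ℝ 1 φ := hf.comp (contDiff_update 1 x i)
  have hright : ∫ t in (0 : ℝ)..1, (φ 1 - φ 0) * (φ 1 + φ 0 - 2 * φ t) =
      (φ 1 - φ 0) * (φ 1 + φ 0 - 2 * ∫ t in (0 : ℝ)..1, φ t) := by
    rw [intervalIntegral.integral_const_mul, intervalIntegral.integral_sub intervalIntegrable_const
      ((hφ.continuous.intervalIntegrable 0 1).const_mul 2), intervalIntegral.integral_const,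
      intervalIntegral.integral_const_mul]
    simp only [sub_zero, one_smul]
  simp only [uComp_update, pderivI_update, update_idem]
  rw [integral_sub_mul_deriv hφ, hright]
  ring
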